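/- Let f_0 be the zero function on [-1/2,1/2]. Then for every ε > 0, ω(ε, f_0, F_m) = √2 · ε. -/

import Mathlib

/-!
A nondecreasing `g` with `g 0 ≥ 0` satisfies `g ≥ g 0 ≥ 0` on `[0, 1/2]`, so
`∫ g² ≥ g(0)² / 2`; when `g 0 ≤ 0` the same holds on `[-1/2, 0]`. Hence an energy budget `ε²`
forces `|g 0| ≤ √2 ε`, and the step function `√2 ε · 𝟙[0, ∞)` attains this bound.
-/

open MeasureTheory

/-- The local modulus of continuity of `f` at `0` over the class of nondecreasing
functions on `[-1/2, 1/2]`. -/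
noncomputable def omegaMonotone (ε : ℝ) (f : ℝ → ℝ) : ℝ :=
  sSup {d : ℝ | ∃ g : ℝ → ℝ, MonotoneOn g (Set.Icc (-(1:ℝ)/2) (1/2)) ∧
    (∫ t in (-(1:ℝ)/2)..(1/2), (g t - f t)^2) ≤ ε^2 ∧ d = |g 0 - f 0|}

open Set

namespace MonotoneOn

variable {g : ℝ → ℝ} {a b c : ℝ}

theorem integrableOn_sq (hg : MonotoneOn g (Icc a b)) :
    IntegrableOn (fun t => g t ^ 2) (Icc a b) :=
  (hg.memLp_isCompact isCompact_Icc (p := 2)).integrable_sq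

theorem sub_mul_sq_le_integral_sq_of_nonneg (hg : MonotoneOn g (Icc a b)) (hc : c ∈ Icc a b)
    (hgc : 0 ≤ g c) : (b - c) * g c ^ 2 ≤ ∫ t in a..b, g t ^ 2 := by
  have hsub : Ioc c b ⊆ Icc a b := Ioc_subset_Icc_self.trans (Icc_subset_Icc_left hc.1)
  rw [intervalIntegral.integral_of_le (hc.1.trans hc.2)]
  calc (b - c) * g c ^ 2 = ∫ _ in Ioc c b, g c ^ 2 := by simp [hc.2]
    _ ≤ ∫ t in Ioc c b, g t ^ 2 :=
      setIntegral_mono_on (integrableOn_const measure_Ioc_lt_top.ne)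
        (hg.integrableOn_sq.mono_set hsub) measurableSet_Ioc fun t ht =>
          pow_le_pow_left₀ hgc (hg hc (hsub ht) ht.1.le) 2
    _ ≤ ∫ t in Ioc a b, g t ^ 2 :=
      setIntegral_mono_set (hg.integrableOn_sq.mono_set Ioc_subset_Icc_self)
        (ae_of_all _ fun _ => sq_nonneg _) (Ioc_subset_Ioc_left hc.1).eventuallyLE

theorem sub_mul_sq_le_integral_sq_of_nonpos (hg : MonotoneOn g (Icc a b)) (hc : c ∈ Icc a b)
    (hgc : g c ≤ 0) : (c - a) * g c ^ 2 ≤ ∫ t in a..b, g t ^ 2 := by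
  have hreflect : MonotoneOn (fun t => -g (-t)) (Icc (-b) (-a)) := fun s hs t ht hst =>
    neg_le_neg (hg ⟨le_neg.mp ht.2, neg_le.mp ht.1⟩ ⟨le_neg.mp hs.2, neg_le.mp hs.1⟩
      (neg_le_neg hst))
  simpa [intervalIntegral.integral_comp_neg (fun t => g t ^ 2), neg_add_eq_sub] using
    hreflect.sub_mul_sq_le_integral_sq_of_nonneg (c := -c) ⟨neg_le_neg hc.2, neg_le_neg hc.1⟩
      (by simpa using hgc)

theorem min_mul_sq_le_integral_sq (hg : MonotoneOn g (Icc a b)) (hc : c ∈ Icc a b) :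
    min (c - a) (b - c) * g c ^ 2 ≤ ∫ t in a..b, g t ^ 2 := by
  rcases le_total 0 (g c) with hgc | hgc
  · exact (mul_le_mul_of_nonneg_right (min_le_right _ _) (sq_nonneg _)).trans
      (hg.sub_mul_sq_le_integral_sq_of_nonneg hc hgc)
  · exact (mul_le_mul_of_nonneg_right (min_le_left _ _) (sq_nonneg _)).trans
      (hg.sub_mul_sq_le_integral_sq_of_nonpos hc hgc)

end MonotoneOn

theorem monotone_indicator_Ici {c y : ℝ} (hy : 0 ≤ y) :
    Monotone ((Ici c).indicator fun _ => y) := by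
  intro s t hst
  by_cases hs : c ≤ s
  · simp [hs, hs.trans hst]
  · by_cases ht : c ≤ t <;> simp [hs, ht, hy]

theorem integral_indicator_Ici_sq {a b c y : ℝ} (hac : a < c) (hcb : c ≤ b) :
    ∫ t in a..b, (Ici c).indicator (fun _ => y) t ^ 2 = (b - c) * y ^ 2 := by
  have hsq : (fun t => (Ici c).indicator (fun _ => y) t ^ 2) =
      (Ici c).indicator fun _ => y ^ 2 := by
    ext t
    by_cases ht : c ≤ t <;> simp [ht]
  have hinter : Ici c ∩ Ioc a b = Icc c b := by
    ext t
    simp only [mem_inter_iff, mem_Ici, mem_Ioc, mem_Icc]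
    grind
  rw [hsq, intervalIntegral.integral_of_le (hac.le.trans hcb),
    integral_indicator_const _ measurableSet_Ici, measureReal_restrict_apply measurableSet_Ici,
    hinter, Real.volume_real_Icc_of_le hcb, smul_eq_mul]

theorem modulus_zero_monotone (ε : ℝ) (hε : 0 < ε) :
    omegaMonotone ε (fun _ => (0:ℝ)) = Real.sqrt 2 * ε := by
  have hpos : 0 < √2 * ε := by positivity
  have hsq : (√2 * ε) ^ 2 = 2 * ε ^ 2 := by rw [mul_pow, Real.sq_sqrt zero_le_two]
  refine IsGreatest.csSup_eq ⟨⟨(Ici 0).indicator fun _ => √2 * ε,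
    (monotone_indicator_Ici hpos.le).monotoneOn _, ?energy, ?value⟩, ?bound⟩
  case energy =>
    simp only [sub_zero]
    rw [integral_indicator_Ici_sq (by norm_num) (by norm_num), hsq]
    linarith
  case value => simp [abs_of_pos hpos]
  case bound =>
    rintro _ ⟨g, hg, henergy, rfl⟩
    simp only [sub_zero] at henergy ⊢
    have hcentre := hg.min_mul_sq_le_integral_sq (c := 0) ⟨by norm_num, by norm_num⟩
    norm_num at hcentre
    exact abs_le_of_sq_le_sq (by linarith) hpos.le
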